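/- arXiv:2107.00669 — 2 statements merged into one kernel-verified Lean document; each statement's English description precedes it below -/
import Mathlib

section
/- The Cartan–Serre map CS : C(□^n) → C(Δ^n) is a chain map, i.e., for every n ≥ 0 and every basis element x of C(□^n) one has ∂(CS(x)) = CS(∂x). -/
/-- The three cells of the interval: `[0]`, `[0,1]` (written `mid`), and `[1]`. -/
inductive CubeF : Type
  | zero : CubeF
  | mid : CubeF
  | one : CubeF
  deriving DecidableEq

namespace CartanSerre

/-- Basis elements of the cubical chain complex `C(□^n)`: tensors `x_1 ⊗ ⋯ ⊗ x_n`. -/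
abbrev CubeB (n : ℕ) := Fin n → CubeF
/-- The cubical chain complex `C(□^n)` (as the free ℤ-module on its basis). -/
abbrev CubeChain (n : ℕ) := CubeB n →₀ ℤ
/-- `C(□^n) ⊗ C(□^n)`, modeled as the free ℤ-module on pairs of basis elements. -/
abbrev CubeChain2 (n : ℕ) := (CubeB n × CubeB n) →₀ ℤ
/-- Basis elements of `C(Δ^n)`: strictly increasing tuples `[v_0, …, v_m]` with
`v_i ∈ {0,…,n}`, i.e. nonempty finite subsets of `Fin (n+1)` (`∅` is not used). -/
abbrev SimpB (n : ℕ) := Finset (Fin (n + 1))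
/-- The normalized simplicial chain complex `C(Δ^n)`. -/
abbrev SimpChain (n : ℕ) := SimpB n →₀ ℤ
/-- `C(Δ^n) ⊗ C(Δ^n)`. -/
abbrev SimpChain2 (n : ℕ) := (SimpB n × SimpB n) →₀ ℤ

/-- Degree of a cubical basis element: the number of factors equal to `[0,1]`. -/
def cubeDeg {n : ℕ} (x : CubeB n) : ℕ :=
  (Finset.univ.filter fun i => x i = CubeF.mid).card

/-- Degree of a simplicial basis element `[v_0, …, v_m]`, namely `m`. -/
def simpDeg {n : ℕ} (s : SimpB n) : ℕ := s.card - 1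

/-- The cubical boundary on a basis element. -/
noncomputable def cubeBdFun (n : ℕ) (x : CubeB n) : CubeChain n :=
  ∑ i ∈ Finset.univ.filter (fun i => x i = CubeF.mid),
    ((-1 : ℤ) ^ (Finset.univ.filter fun j => j < i ∧ x j = CubeF.mid).card) •
      (Finsupp.single (Function.update x i CubeF.one) 1 -
        Finsupp.single (Function.update x i CubeF.zero) 1)

/-- The cubical boundary `∂ : C(□^n) → C(□^n)`. -/
noncomputable def cubeBd (n : ℕ) : CubeChain n →ₗ[ℤ] CubeChain n :=
  Finsupp.lift (CubeChain n) ℤ (CubeB n) (cubeBdFun n)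

/-- The (normalized) simplicial boundary on a basis element. -/
noncomputable def simpBdFun (n : ℕ) (s : SimpB n) : SimpChain n :=
  if 2 ≤ s.card then
    ∑ v ∈ s, ((-1 : ℤ) ^ (s.filter fun w => w < v).card) • Finsupp.single (s.erase v) 1
  else 0

/-- The simplicial boundary `∂ : C(Δ^n) → C(Δ^n)`. -/
noncomputable def simpBd (n : ℕ) : SimpChain n →ₗ[ℤ] SimpChain n :=
  Finsupp.lift (SimpChain n) ℤ (SimpB n) (simpBdFun n)

/-- `p(x) - 1` (0-indexed): the first position of a factor `[0]`, or `n` if there is none. -/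
def pIdx {n : ℕ} (x : CubeB n) : Fin (n + 1) :=
  ⟨(List.ofFn x).findIdx (fun c => decide (c = CubeF.zero)), by
    have h : (List.ofFn x).findIdx (fun c => decide (c = CubeF.zero)) ≤ (List.ofFn x).length :=
      List.findIdx_le_length
    simp only [List.length_ofFn] at h
    omega⟩

/-- The vertex set `[q_1 - 1, …, q_m - 1, p(x) - 1]` of the image of `x` under `CS`. -/
def csSet {n : ℕ} (x : CubeB n) : SimpB n :=
  insert (pIdx x) ((Finset.univ.filter fun i => x i = CubeF.mid).image Fin.castSucc)

/-- The Cartan–Serre map `CS` on a cubical basis element. -/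
noncomputable def csFun (n : ℕ) (x : CubeB n) : SimpChain n :=
  if ∃ i j : Fin n, i < j ∧ x i = CubeF.zero ∧ x j = CubeF.mid then 0
  else Finsupp.single (csSet x) 1

/-- The Cartan–Serre chain map `CS : C(□^n) → C(Δ^n)`. -/
noncomputable def csL (n : ℕ) : CubeChain n →ₗ[ℤ] SimpChain n :=
  Finsupp.lift (SimpChain n) ℤ (CubeB n) (csFun n)

/-- The cubical counit `ε_□ : C(□^n) → ℤ`. -/
noncomputable def cubeEps (n : ℕ) : CubeChain n →ₗ[ℤ] ℤ :=
  Finsupp.lift ℤ ℤ (CubeB n) (fun x => if cubeDeg x = 0 then (1 : ℤ) else 0)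

/-- The simplicial counit `ε_Δ : C(Δ^n) → ℤ`. -/
noncomputable def simpEps (n : ℕ) : SimpChain n →ₗ[ℤ] ℤ :=
  Finsupp.lift ℤ ℤ (SimpB n) (fun s => if s.card = 1 then (1 : ℤ) else 0)

/-- Tensor product of two elements of free modules, in the product-basis model. -/
noncomputable def tensorF {α β : Type*} (a : α →₀ ℤ) (b : β →₀ ℤ) : (α × β) →₀ ℤ :=
  a.sum fun i r => b.sum fun j s => Finsupp.single (i, j) (r * s)

/-- Left factor of the Serre diagonal summand indexed by `S`:
factors in `S` contribute `[0,1]`, the other `[0,1]`-factors contribute `[0]`. -/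
def serreL {n : ℕ} (x : CubeB n) (S : Finset (Fin n)) : CubeB n := fun i =>
  if x i = CubeF.mid then (if i ∈ S then CubeF.mid else CubeF.zero) else x i

/-- Right factor of the Serre diagonal summand indexed by `S`. -/
def serreR {n : ℕ} (x : CubeB n) (S : Finset (Fin n)) : CubeB n := fun i =>
  if x i = CubeF.mid then (if i ∈ S then CubeF.one else CubeF.mid) else x i

/-- Koszul sign exponent of the Serre diagonal summand indexed by `S`. -/
def serreSign {n : ℕ} (x : CubeB n) (S : Finset (Fin n)) : ℕ :=
  ((Finset.univ : Finset (Fin n × Fin n)).filter fun p =>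
    p.1 < p.2 ∧ x p.1 = CubeF.mid ∧ p.1 ∉ S ∧ p.2 ∈ S).card

/-- The Serre diagonal `Δ_□` on a basis element: the tensor product (with Koszul
signs) of `Δ[0] = [0]⊗[0]`, `Δ[1] = [1]⊗[1]`, `Δ[0,1] = [0]⊗[0,1] + [0,1]⊗[1]`. -/
noncomputable def serreDiagFun (n : ℕ) (x : CubeB n) : CubeChain2 n :=
  ∑ S ∈ (Finset.univ.filter fun i => x i = CubeF.mid).powerset,
    ((-1 : ℤ) ^ serreSign x S) • Finsupp.single (serreL x S, serreR x S) 1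

/-- The Serre diagonal `Δ_□ : C(□^n) → C(□^n) ⊗ C(□^n)`. -/
noncomputable def serreDiag (n : ℕ) : CubeChain n →ₗ[ℤ] CubeChain2 n :=
  Finsupp.lift (CubeChain2 n) ℤ (CubeB n) (serreDiagFun n)

/-- The Alexander–Whitney coproduct on a basis element:
`Δ_AW [v_0,…,v_m] = Σ_i [v_0,…,v_i] ⊗ [v_i,…,v_m]`. -/
noncomputable def awFun (n : ℕ) (s : SimpB n) : SimpChain2 n :=
  ∑ v ∈ s, Finsupp.single (s.filter fun w => w ≤ v, s.filter fun w => v ≤ w) 1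

/-- The Alexander–Whitney coproduct `Δ_AW : C(Δ^n) → C(Δ^n) ⊗ C(Δ^n)`. -/
noncomputable def awDiag (n : ℕ) : SimpChain n →ₗ[ℤ] SimpChain2 n :=
  Finsupp.lift (SimpChain2 n) ℤ (SimpB n) (awFun n)

/-- `CS ⊗ CS : C(□^n) ⊗ C(□^n) → C(Δ^n) ⊗ C(Δ^n)` (no Koszul signs: `CS` has degree 0). -/
noncomputable def cs2L (n : ℕ) : CubeChain2 n →ₗ[ℤ] SimpChain2 n :=
  Finsupp.lift (SimpChain2 n) ℤ (CubeB n × CubeB n)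
    (fun p => tensorF (csFun n p.1) (csFun n p.2))

/-- The join on single cube factors: `[0] ∗ [1] = [0,1]`, `[1] ∗ [0] = -[0,1]`,
all other joins of basis elements vanish (the outcome factor being `[0,1]`). -/
def joinF : CubeF → CubeF → ℤ
  | CubeF.zero, CubeF.one => 1
  | CubeF.one, CubeF.zero => -1
  | _, _ => 0

/-- The cubical join `∗` on basis elements. -/
noncomputable def cubeJoinFun (n : ℕ) (x y : CubeB n) : CubeChain n :=
  ((-1 : ℤ) ^ cubeDeg x) •
    ∑ l : Fin n,
      ((if (∀ j, j < l → y j ≠ CubeF.mid) ∧ (∀ j, l < j → x j ≠ CubeF.mid) then (1 : ℤ) else 0) *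
          joinF (x l) (y l)) •
        Finsupp.single (fun j => if j < l then x j else if j = l then CubeF.mid else y j) 1

/-- The cubical join, extended bilinearly to chains. -/
noncomputable def cubeJoinC (n : ℕ) (a b : CubeChain n) : CubeChain n :=
  a.sum fun x r => b.sum fun y s => (r * s) • cubeJoinFun n x y

/-- The simplicial join `∗` on basis elements: `0` if the vertex sets meet, and
otherwise `(-1)^{p + |σ|}` times the union, `|σ|` counting the inversions. -/
noncomputable def simpJoinFun (n : ℕ) (s t : SimpB n) : SimpChain n :=
  if s ∩ t = ∅ ∧ s.Nonempty ∧ t.Nonempty then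
    ((-1 : ℤ) ^ ((s.card - 1) + ((s ×ˢ t).filter fun p => p.2 < p.1).card)) •
      Finsupp.single (s ∪ t) 1
  else 0

/-- The simplicial join, extended bilinearly to chains. -/
noncomputable def simpJoinC (n : ℕ) (a b : SimpChain n) : SimpChain n :=
  a.sum fun s r => b.sum fun t u => (r * u) • simpJoinFun n s t

/-- The linear order `[0] < [0,1] < [1]` on interval cells, via `0 < 1 < 2`. -/
def cellVal : CubeF → ℕ
  | CubeF.zero => 0
  | CubeF.mid => 1
  | CubeF.one => 2

/-- The componentwise partial order on cubical basis elements,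
with `[0] < [0,1] < [1]` on each factor. -/
def cubeLe {n : ℕ} (x y : CubeB n) : Prop := ∀ i, cellVal (x i) ≤ cellVal (y i)

/-- Left-parenthesized iterated join of a nonempty list (the base case `[]` is junk). -/
noncomputable def foldJoin {C : Type*} (join : C → C → C) (z : C) : List C → C
  | [] => z
  | a :: l => l.foldl join a

/-- Left-parenthesized iterated cubical join `∗^{k}` of `k+1` basis elements. -/
noncomputable def iterCubeJoin (n k : ℕ) (f : Fin (k + 1) → CubeB n) : CubeChain n :=
  foldJoin (cubeJoinC n) 0 (List.ofFn fun i : Fin (k + 1) => (Finsupp.single (f i) 1 : CubeChain n))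

/-- Left-parenthesized iterated simplicial join `∗^{k}` of `k+1` chains. -/
noncomputable def iterSimpJoin (n k : ℕ) (g : Fin (k + 1) → SimpChain n) : SimpChain n :=
  foldJoin (simpJoinC n) 0 (List.ofFn g)

/-- The iterated Serre diagonal `Δ_□^k` on a basis element, with `k+1` output factors
(iterated on the last factor; this is unambiguous by coassociativity, and no Koszul
signs appear since `Δ_□` has degree `0`). -/
noncomputable def serreIterFun (n : ℕ) : (k : ℕ) → CubeB n → ((Fin (k + 1) → CubeB n) →₀ ℤ)
  | 0, x => Finsupp.single (fun _ => x) 1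
  | k + 1, x =>
    (serreIterFun n k x).sum fun f c =>
      (serreDiagFun n (f (Fin.last k))).sum fun p d =>
        Finsupp.single
          (fun i : Fin (k + 2) =>
            if h : (i : ℕ) < k then f ⟨(i : ℕ), by omega⟩
            else if (i : ℕ) = k then p.1 else p.2) (c * d)

/-- The iterated Serre diagonal `Δ_□^k : C(□^n) → C(□^n)^{⊗(k+1)}`. -/
noncomputable def serreIter (n k : ℕ) : CubeChain n →ₗ[ℤ] ((Fin (k + 1) → CubeB n) →₀ ℤ) :=
  Finsupp.lift _ ℤ (CubeB n) (serreIterFun n k)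

/-- The iterated Alexander–Whitney coproduct `Δ_AW^k` on a basis element. -/
noncomputable def awIterFun (n : ℕ) : (k : ℕ) → SimpB n → ((Fin (k + 1) → SimpB n) →₀ ℤ)
  | 0, s => Finsupp.single (fun _ => s) 1
  | k + 1, s =>
    (awIterFun n k s).sum fun f c =>
      (awFun n (f (Fin.last k))).sum fun p d =>
        Finsupp.single
          (fun i : Fin (k + 2) =>
            if h : (i : ℕ) < k then f ⟨(i : ℕ), by omega⟩
            else if (i : ℕ) = k then p.1 else p.2) (c * d)

/-- The iterated Alexander–Whitney coproduct `Δ_AW^k : C(Δ^n) → C(Δ^n)^{⊗(k+1)}`. -/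
noncomputable def awIter (n k : ℕ) : SimpChain n →ₗ[ℤ] ((Fin (k + 1) → SimpB n) →₀ ℤ) :=
  Finsupp.lift _ ℤ (SimpB n) (awIterFun n k)

/-- The action of a permutation `τ` on a `k`-fold tensor of basis elements,
with the Koszul sign determined by the degrees of the factors it transposes. -/
noncomputable def koszulPermFun {α : Type*} (deg : α → ℕ) {k : ℕ} (τ : Equiv.Perm (Fin k))
    (f : Fin k → α) : (Fin k → α) →₀ ℤ :=
  ((-1 : ℤ) ^ ∑ p ∈ (Finset.univ : Finset (Fin k × Fin k)).filter
      (fun p => p.1 < p.2 ∧ τ p.2 < τ p.1), deg (f (τ p.1)) * deg (f (τ p.2))) •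
    Finsupp.single (fun i => f (τ i)) 1

/-- The action of a permutation on `k`-fold tensors, with Koszul signs. -/
noncomputable def koszulPerm {α : Type*} (deg : α → ℕ) {k : ℕ} (τ : Equiv.Perm (Fin k)) :
    ((Fin k → α) →₀ ℤ) →ₗ[ℤ] ((Fin k → α) →₀ ℤ) :=
  Finsupp.lift _ ℤ (Fin k → α) (koszulPermFun deg τ)

/-- Tensor product of an `r`-tuple of elements of a free module, product-basis model. -/
noncomputable def tensorPi {r : ℕ} {α : Type*} [DecidableEq α] (c : Fin r → (α →₀ ℤ)) :
    (Fin r → α) →₀ ℤ :=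
  ∑ g ∈ Fintype.piFinset (fun i => (c i).support), Finsupp.single g (∏ i, (c i) (g i))

/-- `CS^{⊗ r} : C(□^n)^{⊗ r} → C(Δ^n)^{⊗ r}` (no Koszul signs: `CS` has degree 0). -/
noncomputable def csTensor (n r : ℕ) : ((Fin r → CubeB n) →₀ ℤ) →ₗ[ℤ] ((Fin r → SimpB n) →₀ ℤ) :=
  Finsupp.lift _ ℤ (Fin r → CubeB n) (fun f => tensorPi fun i => csFun n (f i))

/-- The index in `Fin (k_1 + ⋯ + k_r)` of the `j`-th tensor factor of the `i`-th block. -/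
def blockIdx {r : ℕ} (K : Fin r → ℕ) {m : ℕ} (hm : m + 1 = ∑ i, K i) (i : Fin r)
    (j : Fin (K i)) : Fin (m + 1) :=
  ⟨(∑ j' ∈ Finset.univ.filter (fun j' => j' < i), K j') + (j : ℕ), by
    have h2 : (j : ℕ) < K i := j.isLt
    have h3 : K i + ∑ j' ∈ Finset.univ.filter (fun j' => j' < i), K j' ≤ ∑ i', K i' := by
      rw [← Finset.sum_insert (a := i) (s := Finset.univ.filter (fun j' => j' < i)) (by simp)]
      exact Finset.sum_le_sum_of_subset (Finset.subset_univ _)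
    omega⟩

/-- A `(k_1, …, k_r)`-shuffle: a permutation increasing on each block. -/
def IsShuffle {r : ℕ} (K : Fin r → ℕ) {m : ℕ} (hm : m + 1 = ∑ i, K i)
    (σ : Equiv.Perm (Fin (m + 1))) : Prop :=
  ∀ (i : Fin r) (j j' : Fin (K i)), j < j' → σ (blockIdx K hm i j) < σ (blockIdx K hm i j')

/-- Total degree of the `i`-th block of a `k`-fold cubical tensor. -/
def cubeBlockDeg {n r : ℕ} (K : Fin r → ℕ) {m : ℕ} (hm : m + 1 = ∑ i, K i)
    (f : Fin (m + 1) → CubeB n) (i : Fin r) : ℕ :=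
  ∑ j : Fin (K i), cubeDeg (f (blockIdx K hm i j))

/-- Total degree of the `i`-th block of a `k`-fold simplicial tensor. -/
def simpBlockDeg {n r : ℕ} (K : Fin r → ℕ) {m : ℕ} (hm : m + 1 = ∑ i, K i)
    (f : Fin (m + 1) → SimpB n) (i : Fin r) : ℕ :=
  ∑ j : Fin (K i), simpDeg (f (blockIdx K hm i j))

/-- `∗^{k_1 - 1} ⊗ ⋯ ⊗ ∗^{k_r - 1}` on a cubical `k`-fold tensor basis element, with
the Koszul sign for applying the degree-`(k_i - 1)` maps across the earlier blocks. -/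
noncomputable def cubeBlockJoinFun (n r : ℕ) (K : Fin r → ℕ) {m : ℕ} (hm : m + 1 = ∑ i, K i)
    (f : Fin (m + 1) → CubeB n) : (Fin r → CubeB n) →₀ ℤ :=
  ((-1 : ℤ) ^ ∑ p ∈ (Finset.univ : Finset (Fin r × Fin r)).filter (fun p => p.1 < p.2),
      (K p.2 - 1) * cubeBlockDeg K hm f p.1) •
    tensorPi (fun i : Fin r =>
      foldJoin (cubeJoinC n) 0
        (List.ofFn fun j : Fin (K i) => (Finsupp.single (f (blockIdx K hm i j)) 1 : CubeChain n)))

/-- `∗^{k_1 - 1} ⊗ ⋯ ⊗ ∗^{k_r - 1} : C(□^n)^{⊗ k} → C(□^n)^{⊗ r}`. -/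
noncomputable def cubeBlockJoin (n r : ℕ) (K : Fin r → ℕ) {m : ℕ} (hm : m + 1 = ∑ i, K i) :
    ((Fin (m + 1) → CubeB n) →₀ ℤ) →ₗ[ℤ] ((Fin r → CubeB n) →₀ ℤ) :=
  Finsupp.lift _ ℤ (Fin (m + 1) → CubeB n) (cubeBlockJoinFun n r K hm)

/-- `∗^{k_1 - 1} ⊗ ⋯ ⊗ ∗^{k_r - 1}` on a simplicial `k`-fold tensor basis element. -/
noncomputable def simpBlockJoinFun (n r : ℕ) (K : Fin r → ℕ) {m : ℕ} (hm : m + 1 = ∑ i, K i)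
    (f : Fin (m + 1) → SimpB n) : (Fin r → SimpB n) →₀ ℤ :=
  ((-1 : ℤ) ^ ∑ p ∈ (Finset.univ : Finset (Fin r × Fin r)).filter (fun p => p.1 < p.2),
      (K p.2 - 1) * simpBlockDeg K hm f p.1) •
    tensorPi (fun i : Fin r =>
      foldJoin (simpJoinC n) 0
        (List.ofFn fun j : Fin (K i) => (Finsupp.single (f (blockIdx K hm i j)) 1 : SimpChain n)))

/-- `∗^{k_1 - 1} ⊗ ⋯ ⊗ ∗^{k_r - 1} : C(Δ^n)^{⊗ k} → C(Δ^n)^{⊗ r}`. -/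
noncomputable def simpBlockJoin (n r : ℕ) (K : Fin r → ℕ) {m : ℕ} (hm : m + 1 = ∑ i, K i) :
    ((Fin (m + 1) → SimpB n) →₀ ℤ) →ₗ[ℤ] ((Fin r → SimpB n) →₀ ℤ) :=
  Finsupp.lift _ ℤ (Fin (m + 1) → SimpB n) (simpBlockJoinFun n r K hm)

/-- A chain is homogeneous of degree `m` if its support is contained in degree-`m` basis elements. -/
def cubeHomog (n m : ℕ) (c : CubeChain n) : Prop := ∀ x ∈ c.support, cubeDeg x = m

/-- A simplicial chain is homogeneous of degree `m` if every basis element in its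
support is a strictly increasing tuple `[v_0, …, v_m]`, i.e. has `m+1` vertices. -/
def simpHomog (n m : ℕ) (c : SimpChain n) : Prop := ∀ s ∈ c.support, s.card = m + 1

end CartanSerre

/-! If some `[0]` factor precedes a `[0,1]` factor, then at every `[0,1]` factor the `[1]`-face
and the `[0]`-face have the same image under `CS` (both vanish, or both keep the same first `[0]`
and the same `[0,1]` factors), so both sides vanish. Otherwise `CS(x)` is the simplex on
`q_1 - 1 < ⋯ < q_m - 1 < p(x) - 1`. The `[1]`-face at `q_i` maps to the face omitting `q_i - 1`,
with the same sign. Among the `[0]`-faces only the one at `q_m` survives; its first `[0]` sits at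
`q_m`, so it maps to the face omitting `p(x) - 1`, and the sign `-(-1)^(m-1) = (-1)^m` matches. -/

namespace CartanSerre

open CubeF Finset Function

section FirstZero

variable {n : ℕ} {x y : CubeB n}

lemma ne_zero_of_castSucc_lt_pIdx {j : Fin n} (h : j.castSucc < pIdx x) : x j ≠ zero := by
  have hj : (j : ℕ) < (List.ofFn x).findIdx (fun c => decide (c = zero)) := h
  simpa using List.not_of_lt_findIdx hj

lemma eq_zero_of_pIdx_eq_castSucc {j : Fin n} (h : pIdx x = j.castSucc) : x j = zero := by
  have hj : (List.ofFn x).findIdx (fun c => decide (c = zero)) = j := congrArg Fin.val h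
  have hlt : (List.ofFn x).findIdx (fun c => decide (c = zero)) < (List.ofFn x).length := by
    simp [hj]
  simpa [hj] using List.findIdx_getElem (w := hlt)

lemma pIdx_eq_of (k : Fin (n + 1)) (hbefore : ∀ j : Fin n, j.castSucc < k → x j ≠ zero)
    (hat : ∀ j : Fin n, j.castSucc = k → x j = zero) : pIdx x = k := by
  rcases lt_trichotomy (pIdx x) k with hlt | heq | hgt
  · obtain ⟨j, hj⟩ := Fin.exists_castSucc_eq.mpr (Fin.ne_last_of_lt hlt)
    exact absurd (eq_zero_of_pIdx_eq_castSucc hj.symm) (hbefore j (hj ▸ hlt))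
  · exact heq
  · obtain ⟨j, hj⟩ := Fin.exists_castSucc_eq.mpr (Fin.ne_last_of_lt hgt)
    exact absurd (hat j hj) (ne_zero_of_castSucc_lt_pIdx (hj ▸ hgt))

lemma pIdx_congr (h : ∀ j : Fin n, j.castSucc ≤ pIdx x → (y j = zero ↔ x j = zero)) :
    pIdx y = pIdx x :=
  pIdx_eq_of _ (fun j hj => (h j hj.le).not.mpr (ne_zero_of_castSucc_lt_pIdx hj))
    (fun j hj => (h j hj.le).mpr (eq_zero_of_pIdx_eq_castSucc hj.symm))

end FirstZero

/-- The condition under which `CS` vanishes: some `[0]` factor precedes some `[0,1]` factor. -/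
def ZeroBeforeMid {n : ℕ} (x : CubeB n) : Prop :=
  ∃ i j : Fin n, i < j ∧ x i = zero ∧ x j = mid

/-- The positions `q_1 < ⋯ < q_m` of the `[0,1]` factors. -/
def midSet {n : ℕ} (x : CubeB n) : Finset (Fin n) :=
  univ.filter fun i => x i = mid

section Faces

variable {n : ℕ} {x : CubeB n} {i : Fin n}

lemma mem_midSet {j : Fin n} : j ∈ midSet x ↔ x j = mid := by
  simp [midSet]

lemma csSet_eq : csSet x = insert (pIdx x) ((midSet x).image Fin.castSucc) := rfl

lemma csFun_of_zeroBeforeMid (h : ZeroBeforeMid x) : csFun n x = 0 :=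
  if_pos h

lemma csFun_of_not_zeroBeforeMid (h : ¬ ZeroBeforeMid x) :
    csFun n x = Finsupp.single (csSet x) 1 :=
  if_neg h

lemma ZeroBeforeMid.mono {y : CubeB n} (h : ZeroBeforeMid y)
    (hzero : ∀ j, y j = zero → x j = zero) (hmid : ∀ j, y j = mid → x j = mid) :
    ZeroBeforeMid x :=
  let ⟨a, b, hab, ha, hb⟩ := h
  ⟨a, b, hab, hzero a ha, hmid b hb⟩

lemma castSucc_lt_pIdx (h : ¬ ZeroBeforeMid x) (hi : x i = mid) : i.castSucc < pIdx x := by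
  by_contra! hle
  obtain ⟨j, hj⟩ :=
    Fin.exists_castSucc_eq.mpr (Fin.ne_last_of_lt (hle.trans_lt i.castSucc_lt_last))
  have hjz : x j = zero := eq_zero_of_pIdx_eq_castSucc hj.symm
  have hji : j < i := lt_of_le_of_ne (Fin.castSucc_le_castSucc_iff.mp (hj ▸ hle))
    (by rintro rfl; simp [hi] at hjz)
  exact h ⟨j, i, hji, hjz, hi⟩

lemma pIdx_notMem_image_midSet (h : ¬ ZeroBeforeMid x) :
    pIdx x ∉ (midSet x).image Fin.castSucc := by
  simp only [mem_image, mem_midSet, not_exists, not_and]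
  exact fun j hj => (castSucc_lt_pIdx h hj).ne

lemma midSet_update (hi : x i = mid) {c : CubeF} (hc : c ≠ mid) :
    midSet (update x i c) = (midSet x).erase i := by
  ext j
  rcases eq_or_ne j i with rfl | hji <;> simp [mem_midSet, *]

lemma csFun_update_one (h : ¬ ZeroBeforeMid x) (hi : x i = mid) :
    csFun n (update x i one) = Finsupp.single ((csSet x).erase i.castSucc) 1 := by
  have hnd : ¬ ZeroBeforeMid (update x i one) := fun h' => h <| h'.mono
    (fun j hj => by rcases eq_or_ne j i with rfl | hji <;> simp_all)
    (fun j hj => by rcases eq_or_ne j i with rfl | hji <;> simp_all)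
  have hp : pIdx (update x i one) = pIdx x :=
    pIdx_congr fun j _ => by rcases eq_or_ne j i with rfl | hji <;> simp [*]
  rw [csFun_of_not_zeroBeforeMid hnd, csSet_eq, csSet_eq, midSet_update hi (by decide), hp,
    image_erase (Fin.castSucc_injective n), erase_insert_of_ne (castSucc_lt_pIdx h hi).ne']

lemma csFun_update_zero_of_lt {j : Fin n} (hij : i < j) (hj : x j = mid) :
    csFun n (update x i zero) = 0 :=
  csFun_of_zeroBeforeMid ⟨i, j, hij, update_self i zero x, by rwa [update_of_ne hij.ne']⟩

lemma csFun_update_zero_of_max (h : ¬ ZeroBeforeMid x) (hi : x i = mid)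
    (hmax : ∀ j, x j = mid → j ≤ i) :
    csFun n (update x i zero) = Finsupp.single ((csSet x).erase (pIdx x)) 1 := by
  have hnd : ¬ ZeroBeforeMid (update x i zero) := by
    rintro ⟨a, b, hab, ha, hb⟩
    have hbi : b ≠ i := by rintro rfl; simp at hb
    rw [update_of_ne hbi] at hb
    rcases eq_or_ne a i with rfl | hai
    · exact absurd (hmax b hb) (not_le.mpr hab)
    · exact h ⟨a, b, hab, by rwa [update_of_ne hai] at ha, hb⟩
  have hp : pIdx (update x i zero) = i.castSucc := by
    refine pIdx_eq_of _ (fun j hj => ?_) (fun j hj => by simp [Fin.castSucc_injective _ hj])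
    have hji : j < i := Fin.castSucc_lt_castSucc_iff.mp hj
    rw [update_of_ne hji.ne]
    exact fun hz => h ⟨j, i, hji, hz, hi⟩
  rw [csFun_of_not_zeroBeforeMid hnd, csSet_eq, csSet_eq, midSet_update hi (by decide), hp,
    image_erase (Fin.castSucc_injective n),
    insert_erase (mem_image_of_mem _ (mem_midSet.mpr hi)),
    erase_insert (pIdx_notMem_image_midSet h)]

lemma csFun_update_eq_of_zero_lt {l : Fin n} (hli : l < i) (hl : x l = zero) {c d : CubeF}
    (hc : c ≠ mid) (hd : d ≠ mid) : csFun n (update x i c) = csFun n (update x i d) := by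
  have hzbm : ∀ {c d : CubeF}, c ≠ mid → ZeroBeforeMid (update x i c) →
      ZeroBeforeMid (update x i d) := by
    rintro c d hc ⟨a, b, hab, ha, hb⟩
    have hbi : b ≠ i := by rintro rfl; simp [hc] at hb
    -- a `[0]` at `i` can be traded for the earlier `[0]` at `l`
    refine ⟨if a = i then l else a, b, ?_, ?_, by rwa [update_of_ne hbi] at hb ⊢⟩
    · split_ifs with hai
      · exact hli.trans (hai ▸ hab)
      · exact hab
    · split_ifs with hai
      · rwa [update_of_ne hli.ne]
      · rwa [update_of_ne hai] at ha ⊢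
  by_cases hD : ZeroBeforeMid (update x i c)
  · rw [csFun_of_zeroBeforeMid hD, csFun_of_zeroBeforeMid (hzbm hc hD)]
  have hD' : ¬ ZeroBeforeMid (update x i d) := fun h' => hD (hzbm hd h')
  have hle : pIdx (update x i c) ≤ l.castSucc := by
    by_contra! hlt
    exact ne_zero_of_castSucc_lt_pIdx hlt (by rwa [update_of_ne hli.ne])
  have hp : pIdx (update x i d) = pIdx (update x i c) := by
    refine pIdx_congr fun j hj => ?_
    have hji : j ≠ i := by
      rintro rfl
      exact absurd (hj.trans hle) (not_le.mpr (Fin.castSucc_lt_castSucc_iff.mpr hli))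
    rw [update_of_ne hji, update_of_ne hji]
  rw [csFun_of_not_zeroBeforeMid hD, csFun_of_not_zeroBeforeMid hD', csSet_eq, csSet_eq, hp]
  congr 3
  ext j
  rcases eq_or_ne j i with rfl | hji <;> simp [mem_midSet, *]

lemma csFun_update_one_eq_update_zero (h : ZeroBeforeMid x) (hi : x i = mid) :
    csFun n (update x i one) = csFun n (update x i zero) := by
  obtain ⟨l, j, hlj, hl, hj⟩ := h
  have hli : l ≠ i := by rintro rfl; simp [hi] at hl
  rcases eq_or_ne j i with rfl | hji
  · exact csFun_update_eq_of_zero_lt hlj hl (by decide) (by decide)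
  · have hboth : ∀ c, ZeroBeforeMid (update x i c) := fun c =>
      ⟨l, j, hlj, by rwa [update_of_ne hli], by rwa [update_of_ne hji]⟩
    rw [csFun_of_zeroBeforeMid (hboth one), csFun_of_zeroBeforeMid (hboth zero)]

end Faces

lemma csL_single {n : ℕ} (y : CubeB n) (c : ℤ) :
    csL n (Finsupp.single y c) = c • csFun n y := by
  simp [csL, Finsupp.lift_apply, Finsupp.sum_single_index]

lemma simpBd_single {n : ℕ} (s : SimpB n) :
    simpBd n (Finsupp.single s 1) = simpBdFun n s := by
  simp [simpBd, Finsupp.lift_apply, Finsupp.sum_single_index]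

lemma simpBdFun_insert_of_forall_lt {n : ℕ} {T : SimpB n} {p : Fin (n + 1)} (hT : T.Nonempty)
    (hlt : ∀ v ∈ T, v < p) :
    simpBdFun n (insert p T) =
      ∑ v ∈ T, (-1 : ℤ) ^ #(T.filter (· < v)) • Finsupp.single ((insert p T).erase v) 1 +
        (-1 : ℤ) ^ #T • Finsupp.single T 1 := by
  have hp : p ∉ T := fun hp => lt_irrefl p (hlt p hp)
  have hcard : 2 ≤ #(insert p T) := by
    rw [card_insert_of_notMem hp]
    have := hT.card_pos
    omega
  have hbelow_p : (insert p T).filter (· < p) = T := by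
    rw [filter_insert, if_neg (lt_irrefl p), filter_true_of_mem hlt]
  have hbelow_v : ∀ v ∈ T, (insert p T).filter (· < v) = T.filter (· < v) := fun v hv => by
    rw [filter_insert, if_neg (lt_asymm (hlt v hv))]
  rw [simpBdFun, if_pos hcard, sum_insert hp, hbelow_p, erase_insert hp, add_comm]
  exact congrArg (· + _) (sum_congr rfl fun v hv => by rw [hbelow_v v hv])

lemma card_filter_lt_castSucc_image {n : ℕ} (M : Finset (Fin n)) (i : Fin n) :
    #((M.image Fin.castSucc).filter (· < i.castSucc)) = #(M.filter (· < i)) := by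
  rw [filter_image, card_image_of_injective _ (Fin.castSucc_injective n)]
  simp only [Fin.castSucc_lt_castSucc_iff]

section Boundaries

variable {n : ℕ} {x : CubeB n}

lemma csL_cubeBdFun :
    csL n (cubeBdFun n x) =
      ∑ i ∈ midSet x, (-1 : ℤ) ^ #((midSet x).filter (· < i)) •
        (csFun n (update x i one) - csFun n (update x i zero)) := by
  rw [cubeBdFun, map_sum]
  refine sum_congr rfl fun i _ => ?_
  rw [map_smul, map_sub, csL_single, csL_single, one_smul, one_smul, midSet, filter_filter]
  simp only [and_comm]

lemma csL_cubeBdFun_of_zeroBeforeMid (h : ZeroBeforeMid x) : csL n (cubeBdFun n x) = 0 := by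
  rw [csL_cubeBdFun]
  refine sum_eq_zero fun i hi => ?_
  rw [csFun_update_one_eq_update_zero h (mem_midSet.mp hi), sub_self, smul_zero]

lemma csL_cubeBdFun_of_not_zeroBeforeMid (h : ¬ ZeroBeforeMid x) (hM : (midSet x).Nonempty) :
    csL n (cubeBdFun n x) =
      ∑ i ∈ midSet x, (-1 : ℤ) ^ #((midSet x).filter (· < i)) •
          Finsupp.single ((csSet x).erase i.castSucc) 1 +
        (-1 : ℤ) ^ #(midSet x) • Finsupp.single ((midSet x).image Fin.castSucc) 1 := by
  set M := midSet x
  set q := M.max' hM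
  have hqM : q ∈ M := M.max'_mem hM
  have hmax : ∀ j, x j = mid → j ≤ q := fun j hj => M.le_max' j (mem_midSet.mpr hj)
  have hface : ∀ i ∈ M,
      (-1 : ℤ) ^ #(M.filter (· < i)) • (csFun n (update x i one) - csFun n (update x i zero)) =
        (-1 : ℤ) ^ #(M.filter (· < i)) • Finsupp.single ((csSet x).erase i.castSucc) 1 -
          if i = q then
            (-1 : ℤ) ^ #(M.filter (· < q)) • Finsupp.single ((csSet x).erase (pIdx x)) 1
          else 0 := by
    intro i hi
    have hi' : x i = mid := mem_midSet.mp hi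
    rw [csFun_update_one h hi', smul_sub]
    split_ifs with hiq
    · rw [hiq, csFun_update_zero_of_max h (hiq ▸ hi') hmax]
    · rw [csFun_update_zero_of_lt (lt_of_le_of_ne (hmax i hi') hiq) (mem_midSet.mp hqM), smul_zero]
  have hbelow_q : #(M.filter (· < q)) + 1 = #M := by
    have : M.filter (· < q) = M.erase q := by
      ext j
      simp only [mem_filter, mem_erase]
      exact ⟨fun hj => ⟨hj.2.ne, hj.1⟩,
        fun hj => ⟨hj.2, lt_of_le_of_ne (M.le_max' j hj.2) hj.1⟩⟩
    rw [this, card_erase_add_one hqM]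
  have hopp : (csSet x).erase (pIdx x) = M.image Fin.castSucc :=
    erase_insert (pIdx_notMem_image_midSet h)
  rw [csL_cubeBdFun, sum_congr rfl hface, sum_sub_distrib, sum_ite_eq' M q, if_pos hqM, hopp,
    ← hbelow_q, pow_succ, mul_neg_one, neg_smul, sub_eq_add_neg]

end Boundaries

end CartanSerre

open CartanSerre Finset in
/-- The Cartan–Serre map `CS : C(□^n) → C(Δ^n)` is a chain map:
for every `n ≥ 0` and every basis element `x` of `C(□^n)`, `∂(CS(x)) = CS(∂x)`. -/
theorem cartanSerre_is_chain_map (n : ℕ) (x : CubeB n) :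
    simpBd n (csFun n x) = csL n (cubeBdFun n x) := by
  by_cases hD : ZeroBeforeMid x
  · rw [csFun_of_zeroBeforeMid hD, map_zero, csL_cubeBdFun_of_zeroBeforeMid hD]
  rw [csFun_of_not_zeroBeforeMid hD, simpBd_single]
  rcases (midSet x).eq_empty_or_nonempty with hM | hM
  · rw [csL_cubeBdFun, hM, sum_empty, simpBdFun, if_neg]
    simp [csSet_eq, hM]
  have hlt : ∀ v ∈ (midSet x).image Fin.castSucc, v < pIdx x := by
    simpa using fun i hi => castSucc_lt_pIdx hD (mem_midSet.mp hi)
  rw [csL_cubeBdFun_of_not_zeroBeforeMid hD hM, csSet_eq,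
    simpBdFun_insert_of_forall_lt (hM.image _) hlt,
    sum_image fun _ _ _ _ h => Fin.castSucc_injective n h,
    card_image_of_injective _ (Fin.castSucc_injective n)]
  simp only [card_filter_lt_castSucc_image]
end

section
/- Let x, y, z be basis elements of C(□^n) with x ≤ z and y ≤ z in the componentwise partial order. Then either x ∗ y = 0 or every basis-element summand of x ∗ y is ≤ z. -/
namespace CartanSerre

/-- The basis element `x_{<ℓ} ⊗ [0,1] ⊗ y_{>ℓ}` of the `ℓ`-th summand of `x ∗ y`. -/
def joinSummand {n : ℕ} (x y : CubeB n) (l : Fin n) : CubeB n :=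
  fun j => if j < l then x j else if j = l then CubeF.mid else y j

theorem exists_joinF_ne_zero_of_mem_support_cubeJoinFun {n : ℕ} {x y w : CubeB n}
    (hw : w ∈ (cubeJoinFun n x y).support) :
    ∃ l, joinF (x l) (y l) ≠ 0 ∧ w = joinSummand x y l := by
  obtain ⟨l, -, hl⟩ := Finsupp.mem_support_finsetSum w (Finsupp.support_smul hw)
  rw [Finsupp.smul_single, smul_eq_mul, mul_one] at hl
  obtain ⟨rfl, hc⟩ := (Finsupp.mem_support_single w (joinSummand x y l) _).1 hl
  exact ⟨l, right_ne_zero_of_mul hc, rfl⟩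

/-- Since `joinF a b ≠ 0` forces `{a, b} = {[0], [1]}`, a common upper bound of `a` and `b`
is `[1]`. -/
theorem cellVal_mid_le_of_joinF_ne_zero {a b c : CubeF} (hab : joinF a b ≠ 0)
    (ha : cellVal a ≤ cellVal c) (hb : cellVal b ≤ cellVal c) :
    cellVal CubeF.mid ≤ cellVal c := by
  cases a <;> cases b <;> cases c <;> simp_all [joinF, cellVal]

theorem joinSummand_cubeLe {n : ℕ} {x y z : CubeB n} {l : Fin n} (hx : cubeLe x z)
    (hy : cubeLe y z) (hl : cellVal CubeF.mid ≤ cellVal (z l)) :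
    cubeLe (joinSummand x y l) z := by
  intro j
  rcases lt_trichotomy j l with hjl | rfl | hlj
  · simpa [joinSummand, hjl] using hx j
  · simpa [joinSummand] using hl
  · simpa [joinSummand, hlj.not_gt, hlj.ne'] using hy j

end CartanSerre

open CartanSerre in
/-- If `x ≤ z` and `y ≤ z` in the componentwise partial order on the
basis of `C(□^n)`, then either `x ∗ y = 0` or every basis-element summand of `x ∗ y`
is `≤ z`. -/
theorem cubeJoin_le_of_le (n : ℕ) (x y z : CubeB n) (hx : cubeLe x z) (hy : cubeLe y z) :
    cubeJoinFun n x y = 0 ∨ ∀ w ∈ (cubeJoinFun n x y).support, cubeLe w z := by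
  refine Or.inr fun w hw => ?_
  obtain ⟨l, hl, rfl⟩ := exists_joinF_ne_zero_of_mem_support_cubeJoinFun hw
  exact joinSummand_cubeLe hx hy (cellVal_mid_le_of_joinF_ne_zero hl (hx l) (hy l))
end
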